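/- arXiv:1503.06059 — 5 statements merged into one kernel-verified Lean document; each statement's English description precedes it below -/
import Mathlib

section
/- Let u be a smooth function of (t,x), L-periodic in x, solving the inhomogeneous Burgers equation ∂_t u + u ∂_x u = η for a smooth L-periodic function η. Then for every h ∈ ℝ the pointwise identity (1/2)∂_t(|D^h u| D^h u) + (1/6)∂_h |D^h u|³ + (1/2)∂_x( u |D^h u| D^h u + (1/3)|D^h u|³ ) = D^h η · |D^h u| holds, where D^h u(x) = u(x+h) − u(x). -/
open Real

lemma hasDerivAt_absMul (w : ℝ) : HasDerivAt (fun w : ℝ => |w| * w) (2 * |w|) w := by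
  rcases lt_trichotomy w 0 with hw | hw | hw
  · have h1 : HasDerivAt (fun y : ℝ => -(y * y)) (2 * |w|) w := by
      have h := ((hasDerivAt_id w).mul (hasDerivAt_id w)).neg
      refine h.congr_deriv ?_
      simp [abs_of_neg hw]; ring
    apply h1.congr_of_eventuallyEq
    filter_upwards [Iio_mem_nhds hw] with y hy
    simp [abs_of_neg (Set.mem_Iio.mp hy)]
  · subst hw
    simp only [abs_zero, mul_zero]
    rw [hasDerivAt_iff_tendsto_slope]
    have heq : (fun y : ℝ => |y|) =ᶠ[nhdsWithin 0 {(0:ℝ)}ᶜ] slope (fun y : ℝ => |y| * y) 0 := by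
      refine Filter.eventuallyEq_of_mem self_mem_nhdsWithin ?_
      intro y hy
      have hy0 : y ≠ 0 := hy
      rw [slope_def_field]; field_simp; simp
    have h2 := (continuous_abs.tendsto 0).mono_left
      (nhdsWithin_le_nhds : nhdsWithin (0:ℝ) {(0:ℝ)}ᶜ ≤ nhds 0)
    simpa using h2.congr' heq
  · have h1 : HasDerivAt (fun y : ℝ => y * y) (2 * |w|) w := by
      have h := (hasDerivAt_id w).mul (hasDerivAt_id w)
      refine h.congr_deriv ?_
      simp [abs_of_pos hw]; ring
    apply h1.congr_of_eventuallyEq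
    filter_upwards [Ioi_mem_nhds hw] with y hy
    simp [abs_of_pos (Set.mem_Ioi.mp hy)]

lemma hasDerivAt_absCube (w : ℝ) : HasDerivAt (fun w : ℝ => |w| ^ 3) (3 * (w * |w|)) w := by
  have key : ∀ y : ℝ, |y| ^ 3 = |y| * y * y := by
    intro y
    rw [pow_succ, sq_abs]; ring
  have h := (hasDerivAt_absMul w).mul (hasDerivAt_id w)
  simp only [key]
  refine h.congr_deriv ?_
  simp; ring

theorem pointwise_modified_KHM
    (L : ℝ) (hL : 0 < L) (u η : ℝ → ℝ → ℝ)
    (hu : ContDiff ℝ (⊤ : ℕ∞) (Function.uncurry u))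
    (hη : ContDiff ℝ (⊤ : ℕ∞) (Function.uncurry η))
    (huper : ∀ t x, u t (x + L) = u t x)
    (hηper : ∀ t x, η t (x + L) = η t x)
    (hpde : ∀ t x, deriv (fun s => u s x) t + u t x * deriv (u t) x = η t x) :
    ∀ (h t x : ℝ),
      (1/2) * deriv (fun s => |u s (x + h) - u s x| * (u s (x + h) - u s x)) t
      + (1/6) * deriv (fun k => |u t (x + k) - u t x| ^ 3) h
      + (1/2) * deriv (fun y =>
          u t y * |u t (y + h) - u t y| * (u t (y + h) - u t y)
          + (1/3) * |u t (y + h) - u t y| ^ 3) x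
      = (η t (x + h) - η t x) * |u t (x + h) - u t x| := by
  intro h t x
  have hud : Differentiable ℝ (Function.uncurry u) := hu.differentiable (by simp)
  have hdt : ∀ (t x : ℝ), DifferentiableAt ℝ (fun s => u s x) t := fun t x =>
    (hud (t, x)).comp (f := fun s : ℝ => (s, x)) t (DifferentiableAt.prodMk differentiableAt_id (differentiableAt_const x))
  have hdx : ∀ (t x : ℝ), DifferentiableAt ℝ (u t) x := fun t x =>
    (hud (t, x)).comp (f := fun y : ℝ => (t, y)) x ((differentiableAt_const t).prodMk differentiableAt_id)
  set D := u t (x + h) - u t x with hD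
  set T1 := deriv (fun s => u s (x + h)) t with hT1
  set T0 := deriv (fun s => u s x) t with hT0
  set q := deriv (u t) (x + h) with hq
  set p := deriv (u t) x with hp
  -- time derivatives
  have H1 : HasDerivAt (fun s => u s (x + h)) T1 t := (hdt t (x + h)).hasDerivAt
  have H0 : HasDerivAt (fun s => u s x) T0 t := (hdt t x).hasDerivAt
  -- space derivatives
  have Hq : HasDerivAt (u t) q (x + h) := (hdx t (x + h)).hasDerivAt
  have Hp : HasDerivAt (u t) p x := (hdx t x).hasDerivAt
  -- k-derivative
  have Hk : HasDerivAt (fun k => u t (x + k)) q h := by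
    have := Hq.comp h ((hasDerivAt_id h).const_add x)
    simpa [Function.comp_def] using this
  -- y+h derivative
  have Hyh : HasDerivAt (fun y => u t (y + h)) q x := by
    have := Hq.comp x ((hasDerivAt_id x).add_const h)
    simpa [Function.comp_def] using this
  -- Term 1
  have Dt : HasDerivAt (fun s => u s (x + h) - u s x) (T1 - T0) t := H1.sub H0
  have F1 : HasDerivAt (fun s => |u s (x + h) - u s x| * (u s (x + h) - u s x))
      (2 * |D| * (T1 - T0)) t := HasDerivAt.comp (h₂ := fun w : ℝ => |w| * w) t (hasDerivAt_absMul D) Dt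
  -- Term 2
  have Dk : HasDerivAt (fun k => u t (x + k) - u t x) q h := by
    simpa using Hk.sub_const (u t x)
  have F2 : HasDerivAt (fun k => |u t (x + k) - u t x| ^ 3)
      (3 * (D * |D|) * q) h := HasDerivAt.comp (h₂ := fun w : ℝ => |w| ^ 3) h (hasDerivAt_absCube D) Dk
  -- Term 3
  have Dy : HasDerivAt (fun y => u t (y + h) - u t y) (q - p) x := Hyh.sub Hp
  have F3a : HasDerivAt (fun y => u t y * (|u t (y + h) - u t y| * (u t (y + h) - u t y)))
      (p * (|D| * D) + u t x * (2 * |D| * (q - p))) x :=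
    Hp.mul (HasDerivAt.comp (h₂ := fun w : ℝ => |w| * w) x (hasDerivAt_absMul D) Dy)
  have F3b : HasDerivAt (fun y => (1/3 : ℝ) * |u t (y + h) - u t y| ^ 3)
      ((1/3 : ℝ) * (3 * (D * |D|) * (q - p))) x :=
    (HasDerivAt.comp (h₂ := fun w : ℝ => |w| ^ 3) x (hasDerivAt_absCube D) Dy).const_mul (1/3)
  have F3 : HasDerivAt (fun y =>
      u t y * (|u t (y + h) - u t y| * (u t (y + h) - u t y))
      + (1/3 : ℝ) * |u t (y + h) - u t y| ^ 3)
      (p * (|D| * D) + u t x * (2 * |D| * (q - p)) + (1/3) * (3 * (D * |D|) * (q - p))) x :=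
    F3a.add F3b
  have hfun : (fun y =>
      u t y * |u t (y + h) - u t y| * (u t (y + h) - u t y)
      + (1/3 : ℝ) * |u t (y + h) - u t y| ^ 3) = (fun y =>
      u t y * (|u t (y + h) - u t y| * (u t (y + h) - u t y))
      + (1/3 : ℝ) * |u t (y + h) - u t y| ^ 3) := by
    funext y; ring
  rw [F1.deriv, F2.deriv, hfun, F3.deriv]
  have h1 := hpde t (x + h)
  have h0 := hpde t x
  rw [← hT1, ← hq] at h1
  rw [← hT0, ← hp] at h0
  have hDdef : D = u t (x + h) - u t x := hD
  linear_combination |D| * h1 - |D| * h0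
end

section
/- Let u be a smooth L-periodic (in x) solution of ∂_t u + u ∂_x u = η with η smooth and L-periodic. Then for every h ∈ ℝ, ∂_t( (1/2)∫₀^L |D^h u| D^h u dx ) + ∂_h( (1/6)∫₀^L |D^h u|³ dx ) = ∫₀^L D^h η · |D^h u| dx (modified Kármán–Howarth–Monin identity). -/
open Real intervalIntegral Function MeasureTheory Metric Set Filter

noncomputable def pp1 (f : ℝ → ℝ → ℝ) (s x : ℝ) : ℝ :=
  fderiv ℝ (Function.uncurry f) (s, x) (1, 0)

noncomputable def pp2 (f : ℝ → ℝ → ℝ) (s x : ℝ) : ℝ :=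
  fderiv ℝ (Function.uncurry f) (s, x) (0, 1)

lemma hasDerivAt_pp1 {f : ℝ → ℝ → ℝ} (hf : ContDiff ℝ (⊤ : ℕ∞) (Function.uncurry f)) (s x : ℝ) :
    HasDerivAt (fun s' => f s' x) (pp1 f s x) s := by
  have h1 : HasFDerivAt (Function.uncurry f) (fderiv ℝ (Function.uncurry f) (s, x)) (s, x) :=
    (hf.differentiable (by simp) (s, x)).hasFDerivAt
  have h2 : HasDerivAt (fun s' : ℝ => (s', x)) ((1 : ℝ), (0 : ℝ)) s :=
    (hasDerivAt_id s).prodMk (hasDerivAt_const s x)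
  exact h1.comp_hasDerivAt s h2

lemma hasDerivAt_pp2 {f : ℝ → ℝ → ℝ} (hf : ContDiff ℝ (⊤ : ℕ∞) (Function.uncurry f)) (s x : ℝ) :
    HasDerivAt (fun x' => f s x') (pp2 f s x) x := by
  have h1 : HasFDerivAt (Function.uncurry f) (fderiv ℝ (Function.uncurry f) (s, x)) (s, x) :=
    (hf.differentiable (by simp) (s, x)).hasFDerivAt
  have h2 : HasDerivAt (fun x' : ℝ => (s, x')) ((0 : ℝ), (1 : ℝ)) x :=
    (hasDerivAt_const x s).prodMk (hasDerivAt_id x)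
  exact h1.comp_hasDerivAt x h2

lemma continuous_pp1 {f : ℝ → ℝ → ℝ} (hf : ContDiff ℝ (⊤ : ℕ∞) (Function.uncurry f)) :
    Continuous (fun p : ℝ × ℝ => pp1 f p.1 p.2) :=
  (hf.continuous_fderiv (by simp)).clm_apply continuous_const

lemma continuous_pp2 {f : ℝ → ℝ → ℝ} (hf : ContDiff ℝ (⊤ : ℕ∞) (Function.uncurry f)) :
    Continuous (fun p : ℝ × ℝ => pp2 f p.1 p.2) :=
  (hf.continuous_fderiv (by simp)).clm_apply continuous_const

lemma hasDerivAt_absmul (v : ℝ) : HasDerivAt (fun w : ℝ => |w| * w) (2 * |v|) v := by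
  rcases lt_trichotomy v 0 with hv | hv | hv
  · have h1 : HasDerivAt (fun w : ℝ => -(w * w)) (2 * |v|) v := by
      have := ((hasDerivAt_id v).mul (hasDerivAt_id v)).neg
      refine this.congr_deriv ?_
      simp [abs_of_neg hv]; ring
    refine h1.congr_of_eventuallyEq ?_
    filter_upwards [Iio_mem_nhds hv] with w hw
    rw [abs_of_neg hw]; ring
  · subst hv
    rw [hasDerivAt_iff_tendsto_slope]
    have : ∀ w ∈ ({(0:ℝ)}ᶜ : Set ℝ), |w| = slope (fun w : ℝ => |w| * w) 0 w := by
      intro w hw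
      simp only [slope_def_field, Set.mem_compl_iff, Set.mem_singleton_iff] at hw ⊢
      field_simp
      simp
    have h2 : Filter.Tendsto (fun w : ℝ => |w|) (nhdsWithin 0 {(0:ℝ)}ᶜ) (nhds (2 * |(0:ℝ)|)) := by
      have h3 : Filter.Tendsto (fun w : ℝ => |w|) (nhds 0) (nhds |(0:ℝ)|) := continuous_abs.tendsto 0
      simpa using h3.mono_left nhdsWithin_le_nhds
    exact Filter.Tendsto.congr' (Filter.eventuallyEq_of_mem self_mem_nhdsWithin this) h2
  · have h1 : HasDerivAt (fun w : ℝ => w * w) (2 * |v|) v := by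
      have := (hasDerivAt_id v).mul (hasDerivAt_id v)
      refine this.congr_deriv ?_
      simp [abs_of_pos hv]; ring
    refine h1.congr_of_eventuallyEq ?_
    filter_upwards [Ioi_mem_nhds hv] with w hw
    rw [abs_of_pos hw]

lemma hasDerivAt_abs3 (v : ℝ) : HasDerivAt (fun w : ℝ => |w| ^ 3) (3 * (|v| * v)) v := by
  rcases lt_trichotomy v 0 with hv | hv | hv
  · have h1 : HasDerivAt (fun w : ℝ => -(w ^ 3)) (3 * (|v| * v)) v := by
      have := (hasDerivAt_pow 3 v).neg
      refine this.congr_deriv ?_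
      rw [abs_of_neg hv]; push_cast; ring
    refine h1.congr_of_eventuallyEq ?_
    filter_upwards [Iio_mem_nhds hv] with w hw
    rw [abs_of_neg hw]; ring
  · subst hv
    rw [hasDerivAt_iff_tendsto_slope]
    have hs : ∀ w ∈ ({(0:ℝ)}ᶜ : Set ℝ), w * |w| = slope (fun w : ℝ => |w| ^ 3) 0 w := by
      intro w hw
      simp only [Set.mem_compl_iff, Set.mem_singleton_iff] at hw
      rcases lt_or_gt_of_ne hw with h | h
      · simp only [slope_def_field, abs_of_neg h, abs_zero]
        field_simp; ring
      · simp only [slope_def_field, abs_of_pos h, abs_zero]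
        field_simp; ring
    have h2 : Filter.Tendsto (fun w : ℝ => w * |w|) (nhdsWithin 0 {(0:ℝ)}ᶜ) (nhds (3 * (|(0:ℝ)| * 0))) := by
      have h3 : Filter.Tendsto (fun w : ℝ => w * |w|) (nhds 0) (nhds (0 * |(0:ℝ)|)) :=
        (continuous_id.mul continuous_abs).tendsto 0
      simpa using h3.mono_left nhdsWithin_le_nhds
    exact Filter.Tendsto.congr' (Filter.eventuallyEq_of_mem self_mem_nhdsWithin hs) h2
  · have h1 : HasDerivAt (fun w : ℝ => w ^ 3) (3 * (|v| * v)) v := by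
      have := hasDerivAt_pow 3 v
      refine this.congr_deriv ?_
      rw [abs_of_pos hv]; push_cast; ring
    refine h1.congr_of_eventuallyEq ?_
    filter_upwards [Ioi_mem_nhds hv] with w hw
    rw [abs_of_pos hw]

lemma hasDerivAt_param {F F' : ℝ → ℝ → ℝ} (a b t : ℝ)
    (hF : Continuous (Function.uncurry F)) (hF' : Continuous (Function.uncurry F'))
    (hd : ∀ s x, HasDerivAt (fun s' => F s' x) (F' s x) s) :
    HasDerivAt (fun s => ∫ x in a..b, F s x) (∫ x in a..b, F' t x) t := by
  obtain ⟨C, hC⟩ := ((isCompact_Icc (a := t - 1) (b := t + 1)).prod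
    (isCompact_uIcc (a := a) (b := b))).exists_bound_of_continuousOn hF'.continuousOn
  refine (intervalIntegral.hasDerivAt_integral_of_dominated_loc_of_deriv_le
    (F := F) (F' := F') (bound := fun _ => C) (Metric.ball_mem_nhds t one_pos) ?_ ?_ ?_ ?_ ?_ ?_).2
  · exact Filter.Eventually.of_forall fun s =>
      (hF.comp (continuous_const.prodMk continuous_id)).aestronglyMeasurable
  · exact (hF.comp (continuous_const.prodMk continuous_id)).intervalIntegrable a b
  · exact (hF'.comp (continuous_const.prodMk continuous_id)).aestronglyMeasurable
  · refine MeasureTheory.ae_of_all _ fun x hx s hs => ?_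
    have hs' : s ∈ Set.Icc (t - 1) (t + 1) := by
      rw [Real.ball_eq_Ioo] at hs
      exact Set.Ioo_subset_Icc_self hs
    exact hC (s, x) ⟨hs', Set.uIoc_subset_uIcc hx⟩
  · exact intervalIntegrable_const
  · exact MeasureTheory.ae_of_all _ fun x _ s _ => hd s x

theorem modified_KHM_identity
    (L : ℝ) (hL : 0 < L) (u η : ℝ → ℝ → ℝ)
    (hu : ContDiff ℝ (⊤ : ℕ∞) (Function.uncurry u))
    (hη : ContDiff ℝ (⊤ : ℕ∞) (Function.uncurry η))
    (huper : ∀ t x, u t (x + L) = u t x)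
    (hηper : ∀ t x, η t (x + L) = η t x)
    (hpde : ∀ t x, deriv (fun s => u s x) t + u t x * deriv (u t) x = η t x) :
    ∀ (h t : ℝ),
      deriv (fun s => (1/2) * ∫ x in (0:ℝ)..L,
          |u s (x + h) - u s x| * (u s (x + h) - u s x)) t
      + deriv (fun k => (1/6) * ∫ x in (0:ℝ)..L,
          |u t (x + k) - u t x| ^ 3) h
      = ∫ x in (0:ℝ)..L, (η t (x + h) - η t x) * |u t (x + h) - u t x| := by
  intro h t
  have hucont : Continuous (Function.uncurry u) := hu.continuous
  have hc1 : Continuous (fun p : ℝ × ℝ => pp1 u p.1 p.2) := continuous_pp1 hu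
  have hc2 : Continuous (fun p : ℝ × ℝ => pp2 u p.1 p.2) := continuous_pp2 hu
  -- PDE in terms of pp1, pp2
  have pde' : ∀ s x, pp1 u s x = η s x - u s x * pp2 u s x := by
    intro s x
    have h0 := hpde s x
    rw [(hasDerivAt_pp1 hu s x).deriv, (hasDerivAt_pp2 hu s x).deriv] at h0
    linarith
  -- Step A: time derivative
  have hA : HasDerivAt
      (fun s => ∫ x in (0:ℝ)..L, |u s (x + h) - u s x| * (u s (x + h) - u s x))
      (∫ x in (0:ℝ)..L, 2 * |u t (x + h) - u t x| * (pp1 u t (x + h) - pp1 u t x)) t := by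
    apply hasDerivAt_param (F := fun s x => |u s (x + h) - u s x| * (u s (x + h) - u s x))
      (F' := fun s x => 2 * |u s (x + h) - u s x| * (pp1 u s (x + h) - pp1 u s x))
    · have : Continuous (fun p : ℝ × ℝ => u p.1 (p.2 + h) - u p.1 p.2) :=
        (hucont.comp (continuous_fst.prodMk (continuous_snd.add continuous_const))).sub
          (hucont.comp (continuous_fst.prodMk continuous_snd))
      exact (this.abs.mul this)
    · have hd : Continuous (fun p : ℝ × ℝ => u p.1 (p.2 + h) - u p.1 p.2) :=
        (hucont.comp (continuous_fst.prodMk (continuous_snd.add continuous_const))).sub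
          (hucont.comp (continuous_fst.prodMk continuous_snd))
      have hd1 : Continuous (fun p : ℝ × ℝ => pp1 u p.1 (p.2 + h) - pp1 u p.1 p.2) :=
        (hc1.comp (continuous_fst.prodMk (continuous_snd.add continuous_const))).sub
          (hc1.comp (continuous_fst.prodMk continuous_snd))
      exact ((continuous_const.mul hd.abs).mul hd1)
    · intro s x
      have h1 : HasDerivAt (fun s' => u s' (x + h) - u s' x)
          (pp1 u s (x + h) - pp1 u s x) s :=
        (hasDerivAt_pp1 hu s (x + h)).sub (hasDerivAt_pp1 hu s x)
      exact (hasDerivAt_absmul (u s (x + h) - u s x)).comp s h1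
  -- Step B: h derivative
  have hB : HasDerivAt
      (fun k => ∫ x in (0:ℝ)..L, |u t (x + k) - u t x| ^ 3)
      (∫ x in (0:ℝ)..L,
        3 * (|u t (x + h) - u t x| * (u t (x + h) - u t x)) * pp2 u t (x + h)) h := by
    apply hasDerivAt_param (F := fun k x => |u t (x + k) - u t x| ^ 3)
      (F' := fun k x => 3 * (|u t (x + k) - u t x| * (u t (x + k) - u t x)) * pp2 u t (x + k))
    · have : Continuous (fun p : ℝ × ℝ => u t (p.2 + p.1) - u t p.2) :=
        (hucont.comp (continuous_const.prodMk (continuous_snd.add continuous_fst))).sub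
          (hucont.comp (continuous_const.prodMk continuous_snd))
      exact this.abs.pow 3
    · have hd : Continuous (fun p : ℝ × ℝ => u t (p.2 + p.1) - u t p.2) :=
        (hucont.comp (continuous_const.prodMk (continuous_snd.add continuous_fst))).sub
          (hucont.comp (continuous_const.prodMk continuous_snd))
      have hd2 : Continuous (fun p : ℝ × ℝ => pp2 u t (p.2 + p.1)) :=
        hc2.comp (continuous_const.prodMk (continuous_snd.add continuous_fst))
      exact (continuous_const.mul (hd.abs.mul hd)).mul hd2
    · intro k x
      have h1 : HasDerivAt (fun k' => u t (x + k') - u t x) (pp2 u t (x + k)) k := by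
        have h2 : HasDerivAt (fun k' : ℝ => x + k') 1 k := (hasDerivAt_id k).const_add x
        have h3 := (hasDerivAt_pp2 hu t (x + k)).comp k h2
        simpa using h3.sub_const (u t x)
      exact (hasDerivAt_abs3 (u t (x + k) - u t x)).comp k h1
  -- basic continuity facts in x
  have cU : Continuous fun x => u t x :=
    hucont.comp (continuous_const.prodMk continuous_id)
  have cUh : Continuous fun x => u t (x + h) :=
    hucont.comp (continuous_const.prodMk (continuous_id.add continuous_const))
  have cP1 : Continuous fun x => pp1 u t x :=
    hc1.comp (continuous_const.prodMk continuous_id)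
  have cP1h : Continuous fun x => pp1 u t (x + h) :=
    hc1.comp (continuous_const.prodMk (continuous_id.add continuous_const))
  have cP2 : Continuous fun x => pp2 u t x :=
    hc2.comp (continuous_const.prodMk continuous_id)
  have cP2h : Continuous fun x => pp2 u t (x + h) :=
    hc2.comp (continuous_const.prodMk (continuous_id.add continuous_const))
  have cE : Continuous fun x => η t x :=
    hη.continuous.comp (continuous_const.prodMk continuous_id)
  have cEh : Continuous fun x => η t (x + h) :=
    hη.continuous.comp (continuous_const.prodMk (continuous_id.add continuous_const))
  have cD : Continuous fun x => u t (x + h) - u t x := cUh.sub cU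
  have cDx : Continuous fun x => pp2 u t (x + h) - pp2 u t x := cP2h.sub cP2
  -- the flux function g and its derivative
  set g : ℝ → ℝ := fun x => |u t (x + h) - u t x| ^ 3 / 6
      + u t x * (|u t (x + h) - u t x| * (u t (x + h) - u t x)) / 2 with hgdef
  set g' : ℝ → ℝ := fun x =>
      3 * (|u t (x + h) - u t x| * (u t (x + h) - u t x))
        * (pp2 u t (x + h) - pp2 u t x) / 6
      + (pp2 u t x * (|u t (x + h) - u t x| * (u t (x + h) - u t x))
         + u t x * (2 * |u t (x + h) - u t x| * (pp2 u t (x + h) - pp2 u t x))) / 2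
    with hg'def
  have cg' : Continuous g' := by
    rw [hg'def]
    exact (((continuous_const.mul (cD.abs.mul cD)).mul cDx).div_const 6).add
      (((cP2.mul (cD.abs.mul cD)).add
        (cU.mul ((continuous_const.mul cD.abs).mul cDx))).div_const 2)
  have hgd : ∀ x, HasDerivAt g (g' x) x := by
    intro x
    have hD : HasDerivAt (fun y => u t (y + h) - u t y)
        (pp2 u t (x + h) - pp2 u t x) x := by
      have h2 : HasDerivAt (fun y : ℝ => y + h) 1 x := (hasDerivAt_id x).add_const h
      have h3 := (hasDerivAt_pp2 hu t (x + h)).comp x h2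
      have h4 := h3.sub (hasDerivAt_pp2 hu t x)
      simp only [mul_one] at h4
      exact h4
    have h3 := (hasDerivAt_abs3 (u t (x + h) - u t x)).comp x hD
    have h2 := (hasDerivAt_absmul (u t (x + h) - u t x)).comp x hD
    exact (h3.div_const 6).add (((hasDerivAt_pp2 hu t x).mul h2).div_const 2)
  have hint : (∫ x in (0:ℝ)..L, g' x) = 0 := by
    rw [intervalIntegral.integral_eq_sub_of_hasDerivAt (fun x _ => hgd x)
      (cg'.intervalIntegrable 0 L)]
    have e1 : u t (L + h) = u t (0 + h) := by
      rw [add_comm L h, huper t h, zero_add]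
    have e2 : u t L = u t 0 := by simpa using huper t 0
    rw [hgdef]
    simp only []
    rw [e1, e2]
    ring
  -- pointwise key identity
  have key : ∀ x, 1/2 * (2 * |u t (x + h) - u t x| * (pp1 u t (x + h) - pp1 u t x))
      + 1/6 * (3 * (|u t (x + h) - u t x| * (u t (x + h) - u t x)) * pp2 u t (x + h))
      = (η t (x + h) - η t x) * |u t (x + h) - u t x| - g' x := by
    intro x
    rw [pde' t (x + h), pde' t x, hg'def]
    ring
  -- integrability
  have hiA : IntervalIntegrable
      (fun x => 1/2 * (2 * |u t (x + h) - u t x| * (pp1 u t (x + h) - pp1 u t x)))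
      MeasureTheory.volume 0 L :=
    (continuous_const.mul ((continuous_const.mul cD.abs).mul (cP1h.sub cP1))).intervalIntegrable 0 L
  have hiB : IntervalIntegrable
      (fun x => 1/6 * (3 * (|u t (x + h) - u t x| * (u t (x + h) - u t x)) * pp2 u t (x + h)))
      MeasureTheory.volume 0 L :=
    (continuous_const.mul ((continuous_const.mul (cD.abs.mul cD)).mul cP2h)).intervalIntegrable 0 L
  have hiC : IntervalIntegrable
      (fun x => (η t (x + h) - η t x) * |u t (x + h) - u t x|) MeasureTheory.volume 0 L :=
    ((cEh.sub cE).mul cD.abs).intervalIntegrable 0 L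
  -- assemble
  have d1 : deriv (fun s => 1/2 * ∫ x in (0:ℝ)..L,
      |u s (x + h) - u s x| * (u s (x + h) - u s x)) t
      = 1/2 * ∫ x in (0:ℝ)..L,
        2 * |u t (x + h) - u t x| * (pp1 u t (x + h) - pp1 u t x) :=
    (HasDerivAt.const_mul (1/2 : ℝ) hA).deriv
  have d2 : deriv (fun k => 1/6 * ∫ x in (0:ℝ)..L, |u t (x + k) - u t x| ^ 3) h
      = 1/6 * ∫ x in (0:ℝ)..L,
        3 * (|u t (x + h) - u t x| * (u t (x + h) - u t x)) * pp2 u t (x + h) :=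
    (HasDerivAt.const_mul (1/6 : ℝ) hB).deriv
  rw [d1, d2, ← intervalIntegral.integral_const_mul, ← intervalIntegral.integral_const_mul,
    ← intervalIntegral.integral_add hiA hiB]
  have : (∫ x in (0:ℝ)..L,
      (1/2 * (2 * |u t (x + h) - u t x| * (pp1 u t (x + h) - pp1 u t x))
       + 1/6 * (3 * (|u t (x + h) - u t x| * (u t (x + h) - u t x)) * pp2 u t (x + h))))
      = ∫ x in (0:ℝ)..L,
        ((η t (x + h) - η t x) * |u t (x + h) - u t x| - g' x) :=
    intervalIntegral.integral_congr (fun x _ => key x)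
  rw [this, intervalIntegral.integral_sub hiC (cg'.intervalIntegrable 0 L), hint, sub_zero]
end

section
/- Let u be a smooth L-periodic (in x) solution of ∂_t u + u ∂_x u = η with η smooth and L-periodic. Then for every h ∈ ℝ, ∂_t( (1/2)∫₀^L (D^h u)² dx ) + ∂_h( (1/6)∫₀^L (D^h u)³ dx ) = ∫₀^L D^h η · D^h u dx (Kármán–Howarth–Monin identity). -/
open Real intervalIntegral MeasureTheory

lemma param_hasDerivAt {F : ℝ → ℝ → ℝ} (hF : ContDiff ℝ (⊤ : ℕ∞) (Function.uncurry F))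
    (a b t₀ : ℝ) :
    HasDerivAt (fun s => ∫ x in a..b, F s x)
      (∫ x in a..b, deriv (fun s => F s x) t₀) t₀ := by
  set G : ℝ → ℝ → ℝ := fun s x => fderiv ℝ (Function.uncurry F) (s, x) (1, 0) with hGdef
  have hFcont : Continuous (Function.uncurry F) := hF.continuous
  have hGcont : Continuous (fun p : ℝ × ℝ => G p.1 p.2) := by
    exact ((hF.continuous_fderiv (by simp)).clm_apply continuous_const)
  have hG : ∀ s x, HasDerivAt (fun r => F r x) (G s x) s := by
    intro s x
    have h1 : HasFDerivAt (Function.uncurry F) (fderiv ℝ (Function.uncurry F) (s, x)) (s, x) :=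
      (hF.differentiable (by simp) (s, x)).hasFDerivAt
    have h2 : HasDerivAt (fun r : ℝ => (r, x)) ((1 : ℝ), (0 : ℝ)) s :=
      (hasDerivAt_id s).prodMk (hasDerivAt_const s x)
    exact h1.comp_hasDerivAt s h2
  obtain ⟨C, hC⟩ := (((isCompact_Icc (a := t₀ - 1) (b := t₀ + 1)).prod
      (isCompact_uIcc (a := a) (b := b))).exists_bound_of_continuousOn hGcont.continuousOn)
  have key := intervalIntegral.hasDerivAt_integral_of_dominated_loc_of_deriv_le (F := F) (F' := G)
      (x₀ := t₀) (a := a) (b := b) (μ := MeasureTheory.volume) (bound := fun _ => C) (s := Metric.ball t₀ 1)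
      (Metric.ball_mem_nhds t₀ one_pos)
      (Filter.Eventually.of_forall fun s =>
        ((hFcont.comp (continuous_const.prodMk continuous_id)).aestronglyMeasurable))
      ((hFcont.comp (continuous_const.prodMk continuous_id)).intervalIntegrable a b)
      ((hGcont.comp (continuous_const.prodMk continuous_id)).aestronglyMeasurable)
      (ae_of_all _ fun x hx s hs => by
        refine hC (s, x) ⟨?_, Set.uIoc_subset_uIcc hx⟩
        have := abs_lt.1 (by simpa [Real.dist_eq] using Metric.mem_ball.1 hs)
        exact ⟨by linarith [this.1], by linarith [this.2]⟩)
      (intervalIntegrable_const)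
      (ae_of_all _ fun x hx s hs => hG s x)
  have := key.2
  have heq : (∫ x in a..b, deriv (fun s => F s x) t₀) = ∫ x in a..b, G t₀ x :=
    integral_congr fun x _ => (hG t₀ x).deriv
  rw [heq]
  exact this

theorem KHM_identity
    (L : ℝ) (hL : 0 < L) (u η : ℝ → ℝ → ℝ)
    (hu : ContDiff ℝ (⊤ : ℕ∞) (Function.uncurry u))
    (hη : ContDiff ℝ (⊤ : ℕ∞) (Function.uncurry η))
    (huper : ∀ t x, u t (x + L) = u t x)
    (hηper : ∀ t x, η t (x + L) = η t x)
    (hpde : ∀ t x, deriv (fun s => u s x) t + u t x * deriv (u t) x = η t x) :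
    ∀ (h t : ℝ),
      deriv (fun s => (1/2) * ∫ x in (0:ℝ)..L,
          (u s (x + h) - u s x) ^ 2) t
      + deriv (fun k => (1/6) * ∫ x in (0:ℝ)..L,
          (u t (x + k) - u t x) ^ 3) h
      = ∫ x in (0:ℝ)..L, (η t (x + h) - η t x) * (u t (x + h) - u t x) := by
  intro h t
  have hud : Differentiable ℝ (Function.uncurry u) := hu.differentiable (by simp)
  have hut : ContDiff ℝ (⊤ : ℕ∞) (u t) := hu.comp (contDiff_const.prodMk contDiff_id)
  have hutd : Differentiable ℝ (u t) := hut.differentiable (by simp)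
  have hηt : Continuous (η t) := hη.continuous.comp (continuous_const.prodMk continuous_id)
  -- time partial derivatives
  have HAt : ∀ (s y : ℝ), HasDerivAt (fun r => u r y) (deriv (fun r => u r y) s) s := by
    intro s y
    have : Differentiable ℝ (fun r => u r y) :=
      hud.comp (differentiable_id.prodMk (differentiable_const y))
    exact (this s).hasDerivAt
  have HAx : ∀ y, HasDerivAt (u t) (deriv (u t) y) y := fun y => (hutd y).hasDerivAt
  have hpde' : ∀ y, deriv (fun r => u r y) t = η t y - u t y * deriv (u t) y := by
    intro y; have := hpde t y; linarith
  -- smoothness of the two integrands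
  have hF1 : ContDiff ℝ (⊤ : ℕ∞) (Function.uncurry (fun s x => (u s (x + h) - u s x) ^ 2)) := by
    have h1 : ContDiff ℝ (⊤ : ℕ∞) (fun p : ℝ × ℝ => u p.1 (p.2 + h)) :=
      hu.comp (contDiff_fst.prodMk (contDiff_snd.add contDiff_const))
    have h2 : ContDiff ℝ (⊤ : ℕ∞) (fun p : ℝ × ℝ => u p.1 p.2) := hu
    exact (h1.sub h2).pow 2
  have hF2 : ContDiff ℝ (⊤ : ℕ∞) (Function.uncurry (fun k x => (u t (x + k) - u t x) ^ 3)) := by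
    have h1 : ContDiff ℝ (⊤ : ℕ∞) (fun p : ℝ × ℝ => u t (p.2 + p.1)) :=
      hut.comp (contDiff_snd.add contDiff_fst)
    have h2 : ContDiff ℝ (⊤ : ℕ∞) (fun p : ℝ × ℝ => u t p.2) := hut.comp contDiff_snd
    exact (h1.sub h2).pow 3
  -- differentiate under the integral sign
  have D1 : HasDerivAt (fun s => ∫ x in (0:ℝ)..L, (u s (x + h) - u s x) ^ 2)
      (∫ x in (0:ℝ)..L, deriv (fun s => (u s (x + h) - u s x) ^ 2) t) t :=
    param_hasDerivAt hF1 0 L t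
  have D2 : HasDerivAt (fun k => ∫ x in (0:ℝ)..L, (u t (x + k) - u t x) ^ 3)
      (∫ x in (0:ℝ)..L, deriv (fun k => (u t (x + k) - u t x) ^ 3) h) h :=
    param_hasDerivAt hF2 0 L h
  have D1' := (D1.const_mul ((1:ℝ)/2)).deriv
  have D2' := (D2.const_mul ((1:ℝ)/6)).deriv
  rw [D1', D2']
  -- pointwise form of the derivatives
  have ht1 : ∀ x : ℝ, deriv (fun s => (u s (x + h) - u s x) ^ 2) t
      = 2 * (u t (x + h) - u t x) *
        ((η t (x + h) - u t (x + h) * deriv (u t) (x + h))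
          - (η t x - u t x * deriv (u t) x)) := by
    intro x
    have := (((HAt t (x + h)).fun_sub (HAt t x)).fun_pow 2).deriv
    rw [this]
    rw [hpde' (x + h), hpde' x]
    push_cast
    ring
  have ht2 : ∀ x : ℝ, deriv (fun k => (u t (x + k) - u t x) ^ 3) h
      = 3 * (u t (x + h) - u t x) ^ 2 * deriv (u t) (x + h) := by
    intro x
    have h1 : HasDerivAt (fun k => u t (x + k)) (deriv (u t) (x + h)) h := by
      have := HasDerivAt.comp h (HAx (x + h)) ((hasDerivAt_id h).const_add x)
      simpa [Function.comp_def] using this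
    have := ((h1.sub_const (u t x)).fun_pow 3).deriv
    rw [this]
    push_cast
    ring
  rw [integral_congr (fun x _ => ht1 x), integral_congr (fun x _ => ht2 x)]
  -- continuity facts
  have hc_a : Continuous fun x : ℝ => u t (x + h) :=
    hut.continuous.comp (continuous_id.add continuous_const)
  have hc_b : Continuous (u t) := hut.continuous
  have hc_da : Continuous fun x : ℝ => deriv (u t) (x + h) :=
    (hut.continuous_deriv (by simp)).comp (continuous_id.add continuous_const)
  have hc_db : Continuous (deriv (u t)) := hut.continuous_deriv (by simp)
  have hc_ηa : Continuous fun x : ℝ => η t (x + h) :=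
    hηt.comp (continuous_id.add continuous_const)
  -- the exact-derivative term
  have hF0 : ∀ x : ℝ, HasDerivAt
      (fun y => -((u t (y + h)) ^ 3 / 6) - (u t y) ^ 3 / 3 + u t (y + h) * (u t y) ^ 2 / 2)
      (-(u t (x + h) - u t x) * (u t (x + h) * deriv (u t) (x + h) - u t x * deriv (u t) x)
        + (u t (x + h) - u t x) ^ 2 * deriv (u t) (x + h) / 2) x := by
    intro x
    have ha : HasDerivAt (fun y => u t (y + h)) (deriv (u t) (x + h)) x := by
      have := HasDerivAt.comp x (HAx (x + h)) ((hasDerivAt_id x).add_const h)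
      simpa [Function.comp_def] using this
    have hb : HasDerivAt (u t) (deriv (u t) x) x := HAx x
    have H := (((ha.fun_pow 3).div_const 6).fun_neg.fun_sub ((hb.fun_pow 3).div_const 3)).fun_add
      ((ha.fun_mul (hb.fun_pow 2)).div_const 2)
    exact H.congr_deriv (by push_cast; ring)
  have hc_E : Continuous fun x : ℝ =>
      -(u t (x + h) - u t x) * (u t (x + h) * deriv (u t) (x + h) - u t x * deriv (u t) x)
        + (u t (x + h) - u t x) ^ 2 * deriv (u t) (x + h) / 2 :=
    (((hc_a.sub hc_b).neg.mul ((hc_a.mul hc_da).sub (hc_b.mul hc_db)))).add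
      ((((hc_a.sub hc_b).pow 2).mul hc_da).div_const 2)
  have hintE : (∫ x in (0:ℝ)..L,
      (-(u t (x + h) - u t x) * (u t (x + h) * deriv (u t) (x + h) - u t x * deriv (u t) x)
        + (u t (x + h) - u t x) ^ 2 * deriv (u t) (x + h) / 2)) = 0 := by
    rw [integral_eq_sub_of_hasDerivAt (fun x _ => hF0 x) (hc_E.intervalIntegrable 0 L)]
    have pa : u t (L + h) = u t (0 + h) := by
      rw [add_comm L h, huper t h, zero_add]
    have pb : u t L = u t 0 := by
      have := huper t 0; rw [zero_add] at this; rw [this]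
    rw [pa, pb]; ring
  -- combine
  have hC_cont : Continuous fun x : ℝ => (η t (x + h) - η t x) * (u t (x + h) - u t x) :=
    (hc_ηa.sub hηt).mul (hc_a.sub hc_b)
  have hf2_cont : Continuous fun x : ℝ =>
      3 * (u t (x + h) - u t x) ^ 2 * deriv (u t) (x + h) :=
    (continuous_const.mul ((hc_a.sub hc_b).pow 2)).mul hc_da
  have hsplit : ∀ x : ℝ,
      2 * (u t (x + h) - u t x) *
        ((η t (x + h) - u t (x + h) * deriv (u t) (x + h))
          - (η t x - u t x * deriv (u t) x))
      = 2 * (-(u t (x + h) - u t x) *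
            (u t (x + h) * deriv (u t) (x + h) - u t x * deriv (u t) x)
          + (u t (x + h) - u t x) ^ 2 * deriv (u t) (x + h) / 2)
        + 2 * ((η t (x + h) - η t x) * (u t (x + h) - u t x))
        - (1/3) * (3 * (u t (x + h) - u t x) ^ 2 * deriv (u t) (x + h)) := by
    intro x; ring
  rw [integral_congr (fun x _ => hsplit x)]
  rw [intervalIntegral.integral_sub
      (((continuous_const.fun_mul hc_E).fun_add (continuous_const.fun_mul hC_cont)).intervalIntegrable 0 L)
      ((continuous_const.fun_mul hf2_cont).intervalIntegrable 0 L),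
    intervalIntegral.integral_add
      ((continuous_const.fun_mul hc_E).intervalIntegrable 0 L)
      ((continuous_const.fun_mul hC_cont).intervalIntegrable 0 L),
    intervalIntegral.integral_const_mul, intervalIntegral.integral_const_mul,
    intervalIntegral.integral_const_mul, hintE]
  ring
end

section
/- Let u, ū ∈ ℝ with u ≥ ū, and let a : ℝ → ℝ be C¹ such that a'(v) − a'(w) ≥ C (v−w)^β for all v ≥ w, where C > 0 and β ≥ 1. Let A be an antiderivative of a. Then (u − ū)(a(u) + a(ū)) − 2(A(u) − A(ū)) ≥ C' |u − ū|^{β+2} with C' = C/((β+1)(β+2)). -/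
/-!
The bound follows from two monotonicity arguments in the free endpoint. First, for `ub ≤ x`,
the tangent-line gap `w ↦ a w - w a'(x) - C/(β+1) (x - w)^(β+1)` has derivative
`a'(w) - a'(x) + C (x - w)^β ≤ 0` on `[ub, x]`, so comparing its values at `ub` and `x` gives
`(x - ub) a'(x) - (a x - a ub) ≥ C/(β+1) (x - ub)^(β+1)`. Second, this quantity is exactly the
derivative in `u` of `(u - ub)(a u + a ub) - 2(A u - A ub) - C/((β+1)(β+2)) (u - ub)^(β+2)`,
which therefore increases from its value `0` at `u = ub`.
-/

open Real Set

theorem le_mul_deriv_sub_sub_of_le_deriv_sub {a : ℝ → ℝ} {C β ub x : ℝ} (hβ : -1 < β)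
    (ha : Differentiable ℝ a) (hx : ub ≤ x)
    (hmono : ∀ w ∈ Ioo ub x, C * (x - w) ^ β ≤ deriv a x - deriv a w) :
    C / (β + 1) * (x - ub) ^ (β + 1) ≤ (x - ub) * deriv a x - (a x - a ub) := by
  have hβ1 : 0 < β + 1 := by linarith
  set φ : ℝ → ℝ := fun w => a w - w * deriv a x - C / (β + 1) * (x - w) ^ (β + 1)
  have hφ_cont : Continuous φ :=
    (ha.continuous.sub (continuous_id.mul continuous_const)).sub <| continuous_const.mul <|
      (continuous_const.sub continuous_id).rpow_const fun _ => Or.inr hβ1.le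
  have hφ_deriv : ∀ w ∈ Ioo ub x,
      HasDerivAt φ (deriv a w - deriv a x + C * (x - w) ^ β) w := by
    intro w hw
    have hpow := ((hasDerivAt_id' w).const_sub x).rpow_const (p := β + 1)
      (Or.inl (sub_pos.2 hw.2).ne')
    refine (((ha w).hasDerivAt.sub ((hasDerivAt_id' w).mul_const (deriv a x))).sub
      (hpow.const_mul (C / (β + 1)))).congr_deriv ?_
    rw [add_sub_cancel_right]
    field_simp
    ring
  have hφ_anti : AntitoneOn φ (Icc ub x) := by
    refine antitoneOn_of_hasDerivWithinAt_nonpos (convex_Icc ub x)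
      (f' := fun w => deriv a w - deriv a x + C * (x - w) ^ β) hφ_cont.continuousOn
      (fun w hw => ?_) (fun w hw => ?_) <;> rw [interior_Icc] at hw
    · exact (hφ_deriv w hw).hasDerivWithinAt
    · linarith [hmono w hw]
  have hφ_le := hφ_anti (left_mem_Icc.2 hx) (right_mem_Icc.2 hx) hx
  simp only [φ, sub_self, zero_rpow hβ1.ne'] at hφ_le
  linarith

theorem hasDerivAt_flux_gap {a A : ℝ → ℝ} {ub y : ℝ} (ha : DifferentiableAt ℝ a y)
    (hA : HasDerivAt A (a y) y) :
    HasDerivAt (fun y => (y - ub) * (a y + a ub) - 2 * (A y - A ub))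
      ((y - ub) * deriv a y - (a y - a ub)) y := by
  refine (((hasDerivAt_id' y).sub_const ub).mul (ha.hasDerivAt.add_const (a ub))).sub
    ((hA.sub_const (A ub)).const_mul 2) |>.congr_deriv ?_
  ring

theorem coercivity_monotone_flux_general
    (u ub C β : ℝ) (hu : ub ≤ u) (hβ : 1 ≤ β)
    (a A : ℝ → ℝ) (ha : ContDiff ℝ 1 a)
    (hA : ∀ x, HasDerivAt A (a x) x)
    (hmono : ∀ v w : ℝ, w ≤ v → C * (v - w) ^ β ≤ deriv a v - deriv a w) :
    (C / ((β + 1) * (β + 2))) * |u - ub| ^ (β + 2)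
      ≤ (u - ub) * (a u + a ub) - 2 * (A u - A ub) := by
  have hadiff : Differentiable ℝ a := ha.differentiable one_ne_zero
  set G : ℝ → ℝ := fun y => (y - ub) * (a y + a ub) - 2 * (A y - A ub)
    - C / ((β + 1) * (β + 2)) * (y - ub) ^ (β + 2)
  have hG : ∀ y, HasDerivAt G
      ((y - ub) * deriv a y - (a y - a ub) - C / (β + 1) * (y - ub) ^ (β + 1)) y := by
    intro y
    have hpow := ((hasDerivAt_id' y).sub_const ub).rpow_const (p := β + 2) (Or.inr (by linarith))
    refine ((hasDerivAt_flux_gap (hadiff y) (hA y)).sub (hpow.const_mul _)).congr_deriv ?_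
    rw [show β + 2 - 1 = β + 1 by ring]
    field_simp
  have hG_mono : MonotoneOn G (Icc ub u) :=
    monotoneOn_of_hasDerivWithinAt_nonneg (convex_Icc ub u)
      (continuous_iff_continuousAt.2 fun y => (hG y).continuousAt).continuousOn
      (fun y _ => (hG y).hasDerivWithinAt) fun y hy => by
        rw [interior_Icc] at hy
        exact sub_nonneg.2 <| le_mul_deriv_sub_sub_of_le_deriv_sub (by linarith) hadiff hy.1.le
          fun w hw => hmono y w hw.2.le
  have hG_le := hG_mono (left_mem_Icc.2 hu) (right_mem_Icc.2 hu) hu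
  simp only [G, sub_self, zero_mul, mul_zero, zero_rpow (by linarith : β + 2 ≠ 0)] at hG_le
  rw [abs_of_nonneg (sub_nonneg.2 hu)]
  linarith

theorem coercivity_monotone_flux
    (u ub C β : ℝ) (hu : ub ≤ u) (hC : 0 < C) (hβ : 1 ≤ β)
    (a A : ℝ → ℝ) (ha : ContDiff ℝ 1 a)
    (hA : ∀ x, HasDerivAt A (a x) x)
    (hmono : ∀ v w : ℝ, w ≤ v → C * (v - w) ^ β ≤ deriv a v - deriv a w) :
    (C / ((β + 1) * (β + 2))) * |u - ub| ^ (β + 2)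
      ≤ (u - ub) * (a u + a ub) - 2 * (A u - A ub) :=
  coercivity_monotone_flux_general u ub C β hu hβ a A ha hA hmono
end

section
/- Let u : [0,L] → ℝ be C², L-periodic, with zero average. Then for every h > 0, ∫₀^L |u(x+h) − u(x)|³ dx ≤ c h² (∫₀^L u² dx)^{7/8} (∫₀^L (∂_x² u)² dx)^{5/8} for a universal constant c. -/
/-!
Write `Δ(x) = u(x + h) - u(x)`. Cauchy–Schwarz on `Δ(x) = ∫_x^{x+h} u'` gives
`Δ(x)² ≤ h ∫_x^{x+h} u'²`, and averaging the window integral over a period gives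
`∫₀ᴸ |Δ|³ ≤ 2 sup|u| · h² ∫₀ᴸ u'²`. Since `u` has zero mean it vanishes somewhere, so the
Agmon inequality `sup|u|⁴ ≤ 4 ∫u² ∫u'²` holds, and integration by parts gives the interpolation
`(∫u'²)² ≤ ∫u² ∫u''²`. Combining, `sup|u| · ∫u'² ≤ 2 (∫u²)^{7/8} (∫u''²)^{5/8}`.
-/

open Real intervalIntegral

theorem sq_intervalIntegral_mul_le_of_le {a b : ℝ} (hab : a ≤ b) {f g : ℝ → ℝ}
    (hf : Continuous f) (hg : Continuous g) :
    (∫ x in a..b, f x * g x) ^ 2 ≤ (∫ x in a..b, f x ^ 2) * ∫ x in a..b, g x ^ 2 := by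
  set F := ∫ x in a..b, f x ^ 2
  set G := ∫ x in a..b, g x ^ 2
  set I := ∫ x in a..b, f x * g x
  have hquad : ∀ t : ℝ, 0 ≤ F * (t * t) + (2 * I) * t + G := by
    intro t
    have hexpand : (∫ x in a..b, (t * f x + g x) ^ 2) = F * (t * t) + (2 * I) * t + G := by
      simp only [add_sq, mul_pow]
      rw [integral_add, integral_add, integral_const_mul]
      · simp only [mul_assoc, mul_left_comm _ t, integral_const_mul, F, G, I]
        ring
      all_goals exact Continuous.intervalIntegrable (by fun_prop) _ _
    rw [← hexpand]
    exact integral_nonneg hab fun x _ => sq_nonneg _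
  have := discrim_le_zero hquad
  rw [discrim] at this
  linarith

theorem sq_intervalIntegral_mul_le (a b : ℝ) {f g : ℝ → ℝ}
    (hf : Continuous f) (hg : Continuous g) :
    (∫ x in a..b, f x * g x) ^ 2 ≤ (∫ x in a..b, f x ^ 2) * ∫ x in a..b, g x ^ 2 := by
  rcases le_total a b with hab | hba
  · exact sq_intervalIntegral_mul_le_of_le hab hf hg
  · simpa only [integral_symm b a, neg_sq, neg_mul_neg] using
      sq_intervalIntegral_mul_le_of_le hba hf hg

theorem Function.Periodic.deriv {f : ℝ → ℝ} {c : ℝ} (hf : Function.Periodic f c) :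
    Function.Periodic (deriv f) c := fun x => by
  rw [← deriv_comp_add_const, hf.funext]

theorem sq_sub_le_mul_integral_deriv_sq {u : ℝ → ℝ} (hu : ContDiff ℝ 1 u) (x y : ℝ) :
    (u y - u x) ^ 2 ≤ (y - x) * ∫ t in x..y, deriv u t ^ 2 := by
  have hftc : ∫ t in x..y, deriv u t = u y - u x :=
    integral_deriv_eq_sub (fun t _ => hu.differentiable one_ne_zero t)
      ((hu.continuous_deriv le_rfl).intervalIntegrable _ _)
  simpa [hftc] using
    sq_intervalIntegral_mul_le x y (f := fun _ => 1) continuous_const (hu.continuous_deriv le_rfl)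

section Periodic

open Function

variable {u : ℝ → ℝ} {L : ℝ}

theorem sq_integral_deriv_sq_le_of_periodic (hu : ContDiff ℝ 2 u) (hper : Periodic u L) :
    (∫ x in 0..L, deriv u x ^ 2) ^ 2 ≤
      (∫ x in 0..L, u x ^ 2) * ∫ x in 0..L, deriv (deriv u) x ^ 2 := by
  have hu' : ContDiff ℝ 1 (deriv u) := hu.deriv'
  have hparts : ∫ x in 0..L, u x * deriv (deriv u) x = -∫ x in 0..L, deriv u x ^ 2 := by
    rw [integral_mul_deriv_eq_deriv_mul (fun x _ => (hu.differentiable two_ne_zero x).hasDerivAt)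
      (fun x _ => (hu'.differentiable one_ne_zero x).hasDerivAt)
      ((hu.continuous_deriv one_le_two).intervalIntegrable _ _)
      ((hu'.continuous_deriv le_rfl).intervalIntegrable _ _)]
    simp only [← sq, by simpa using hper 0, by simpa using hper.deriv 0, sub_self, zero_sub]
  rw [← neg_sq, ← hparts]
  exact sq_intervalIntegral_mul_le 0 L hu.continuous (hu'.continuous_deriv le_rfl)

theorem pow_four_le_of_periodic_of_eq_zero (hu : ContDiff ℝ 1 u)
    (hper : Periodic u L) (hL : 0 < L) {x₀ : ℝ} (hx₀ : u x₀ = 0) (y : ℝ) :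
    u y ^ 4 ≤ 4 * (∫ x in 0..L, u x ^ 2) * ∫ x in 0..L, deriv u x ^ 2 := by
  obtain ⟨z, ⟨hx₀z, hzL⟩, hyz⟩ := hper.exists_mem_Ico hL y x₀
  have hu' : Continuous (deriv u) := hu.continuous_deriv le_rfl
  have hsq : u z ^ 2 = ∫ t in x₀..z, 2 * u t * deriv u t := by
    rw [integral_eq_sub_of_hasDerivAt (f := fun t => u t ^ 2)
      (fun t _ => by simpa using ((hu.differentiable one_ne_zero t).hasDerivAt).fun_pow 2)
      (Continuous.intervalIntegrable (by fun_prop) _ _), hx₀]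
    ring
  have hbound : u z ^ 2 ≤ 2 * ∫ t in 0..L, |u t| * |deriv u t| := by
    have hperabs : Periodic (fun t => |2 * u t * deriv u t|) L := fun t => by
      simp only [hper t, hper.deriv t]
    calc u z ^ 2 ≤ ∫ t in x₀..z, |2 * u t * deriv u t| :=
          hsq ▸ (le_abs_self _).trans (abs_integral_le_integral_abs hx₀z)
      _ ≤ ∫ t in x₀..x₀ + L, |2 * u t * deriv u t| :=
          integral_mono_interval le_rfl hx₀z hzL.le
            (Filter.Eventually.of_forall fun t => abs_nonneg _)
            (Continuous.intervalIntegrable (by fun_prop) _ _)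
      _ = ∫ t in 0..L, |2 * u t * deriv u t| := by
          simpa using hperabs.intervalIntegral_add_eq x₀ 0
      _ = 2 * ∫ t in 0..L, |u t| * |deriv u t| := by
          simp only [abs_mul, abs_two, mul_assoc, integral_const_mul]
  calc u y ^ 4 = (u z ^ 2) ^ 2 := by rw [hyz]; ring
    _ ≤ (2 * ∫ t in 0..L, |u t| * |deriv u t|) ^ 2 :=
        pow_le_pow_left₀ (sq_nonneg _) hbound 2
    _ ≤ 4 * ((∫ x in 0..L, u x ^ 2) * ∫ x in 0..L, deriv u x ^ 2) := by
        rw [mul_pow]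
        gcongr
        · norm_num
        · simpa only [sq_abs] using
            sq_intervalIntegral_mul_le 0 L hu.continuous.abs hu'.abs
    _ = _ := by ring

end Periodic

theorem exists_eq_zero_of_intervalIntegral_eq_zero {f : ℝ → ℝ} (hf : Continuous f) {a b : ℝ}
    (hab : a ≠ b) (hint : ∫ x in a..b, f x = 0) : ∃ x, f x = 0 := by
  obtain ⟨x, -, hx⟩ := exists_eq_interval_average hab hf.continuousOn
  exact ⟨x, by rw [hx, interval_average_eq, hint, smul_zero]⟩

theorem intervalIntegral_comp_add_sub_eq {G : ℝ → ℝ} (hG : Continuous G) {L c : ℝ}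
    (hGL : ∀ x, G (x + L) - G x = c) (h : ℝ) :
    ∫ x in 0..L, (G (x + h) - G x) = h * c := by
  have hint : ∀ a b, IntervalIntegrable G MeasureTheory.volume a b := hG.intervalIntegrable
  have hshift : ∀ s a b, IntervalIntegrable (fun x => G (x + s)) MeasureTheory.volume a b :=
    fun s => (hG.comp (continuous_add_const s)).intervalIntegrable
  have hperiod : ∫ x in L..h + L, G x = ∫ x in 0..h, G (x + L) := by
    simp [integral_comp_add_right]
  rw [integral_sub (hshift h 0 L) (hint 0 L),
    integral_comp_add_right, zero_add, integral_interval_sub_interval_comm' (hint h (L + h))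
      (hint 0 L) (hint h 0), add_comm L h, hperiod,
    ← integral_sub (hshift L 0 h) (hint 0 h)]
  simp [hGL]

theorem continuous_intervalIntegral_add {g : ℝ → ℝ} (hg : Continuous g) (h : ℝ) :
    Continuous fun x => ∫ t in x..x + h, g t := by
  have hprim := continuous_primitive (μ := MeasureTheory.volume) hg.intervalIntegrable 0
  refine ((hprim.comp (continuous_add_const h)).sub hprim).congr fun x => ?_
  exact integral_interval_sub_left (hg.intervalIntegrable _ _) (hg.intervalIntegrable _ _)

theorem Function.Periodic.intervalIntegral_intervalIntegral_add {g : ℝ → ℝ} {L : ℝ}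
    (hg : Continuous g) (hper : Function.Periodic g L) (h : ℝ) :
    ∫ x in 0..L, (∫ t in x..x + h, g t) = h * ∫ t in 0..L, g t := by
  set G : ℝ → ℝ := fun x => ∫ t in 0..x, g t
  have hwindow : ∀ x y, ∫ t in x..y, g t = G y - G x := fun x y =>
    (integral_interval_sub_left (hg.intervalIntegrable _ _) (hg.intervalIntegrable _ _)).symm
  simp only [hwindow]
  refine intervalIntegral_comp_add_sub_eq (continuous_primitive hg.intervalIntegrable 0)
    (fun x => ?_) h
  rw [← hwindow, ← hwindow]
  simpa using hper.intervalIntegral_add_eq x 0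

theorem abs_sub_pow_three_le {a b M : ℝ} (ha : |a| ≤ M) (hb : |b| ≤ M) :
    |a - b| ^ 3 ≤ 2 * M * (a - b) ^ 2 := by
  have hab : |a - b| ≤ 2 * M := (abs_sub a b).trans (by linarith)
  calc |a - b| ^ 3 = |a - b| * (a - b) ^ 2 := by rw [← sq_abs]; ring
    _ ≤ 2 * M * (a - b) ^ 2 := by gcongr

theorem mul_le_rpow_mul_rpow_of_pow_four_le {A B D M : ℝ} (hA : 0 ≤ A) (hB : 0 ≤ B)
    (hM4 : M ^ 4 ≤ 4 * A * D) (hD2 : D ^ 2 ≤ A * B) :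
    M * D ≤ 2 * A ^ ((7 : ℝ) / 8) * B ^ ((5 : ℝ) / 8) := by
  have hA8 : (A ^ ((7 : ℝ) / 8)) ^ 8 = A ^ 7 := by rw [← rpow_natCast, ← rpow_mul hA]; norm_num
  have hB8 : (B ^ ((5 : ℝ) / 8)) ^ 8 = B ^ 5 := by rw [← rpow_natCast, ← rpow_mul hB]; norm_num
  refine le_of_pow_le_pow_left₀ (n := 8) (by norm_num) (by positivity) ?_
  calc (M * D) ^ 8 = (M ^ 4) ^ 2 * D ^ 8 := by ring
    _ ≤ (4 * A * D) ^ 2 * D ^ 8 := by gcongr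
    _ = 16 * A ^ 2 * (D ^ 2) ^ 5 := by ring
    _ ≤ 16 * A ^ 2 * (A * B) ^ 5 := by gcongr
    _ ≤ 2 ^ 8 * A ^ 7 * B ^ 5 := by nlinarith [pow_nonneg hA 7, pow_nonneg hB 5]
    _ = (2 * A ^ ((7 : ℝ) / 8) * B ^ ((5 : ℝ) / 8)) ^ 8 := by
        rw [mul_pow, mul_pow, hA8, hB8]

theorem cube_difference_estimate :
    ∃ c : ℝ, 0 < c ∧ ∀ (L : ℝ) (u : ℝ → ℝ) (h : ℝ), 0 < L → 0 < h →
      ContDiff ℝ 2 u → Function.Periodic u L →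
      (∫ x in (0:ℝ)..L, u x) = 0 →
      (∫ x in (0:ℝ)..L, |u (x + h) - u x| ^ 3)
        ≤ c * h ^ 2 * (∫ x in (0:ℝ)..L, (u x) ^ 2) ^ ((7:ℝ)/8)
            * (∫ x in (0:ℝ)..L, (deriv (deriv u) x) ^ 2) ^ ((5:ℝ)/8) := by
  refine ⟨4, by norm_num, fun L u h hL hh hu hper hmean => ?_⟩
  have hu1 : ContDiff ℝ 1 u := hu.of_le one_le_two
  set A := ∫ x in (0:ℝ)..L, u x ^ 2
  set B := ∫ x in (0:ℝ)..L, deriv (deriv u) x ^ 2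
  set D := ∫ x in (0:ℝ)..L, deriv u x ^ 2
  have hA : 0 ≤ A := integral_nonneg hL.le fun x _ => sq_nonneg _
  have hB : 0 ≤ B := integral_nonneg hL.le fun x _ => sq_nonneg _
  have hD : 0 ≤ D := integral_nonneg hL.le fun x _ => sq_nonneg _
  obtain ⟨x₀, hx₀⟩ := exists_eq_zero_of_intervalIntegral_eq_zero hu.continuous hL.ne hmean
  set M := (4 * A * D) ^ ((4 : ℕ)⁻¹ : ℝ)
  have hM4 : M ^ 4 = 4 * A * D := rpow_inv_natCast_pow (by positivity) four_ne_zero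
  have hsup : ∀ x, |u x| ≤ M := fun x =>
    le_of_pow_le_pow_left₀ four_ne_zero (by positivity) <| by
      rw [Even.pow_abs (by norm_num), hM4]
      exact pow_four_le_of_periodic_of_eq_zero hu1 hper hL hx₀ x
  have hcube : ∀ x, |u (x + h) - u x| ^ 3 ≤ 2 * M * h * ∫ t in x..x + h, deriv u t ^ 2 := by
    intro x
    have hdiff := sq_sub_le_mul_integral_deriv_sq hu1 x (x + h)
    rw [add_sub_cancel_left] at hdiff
    calc |u (x + h) - u x| ^ 3 ≤ 2 * M * (u (x + h) - u x) ^ 2 :=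
          abs_sub_pow_three_le (hsup _) (hsup _)
      _ ≤ 2 * M * h * ∫ t in x..x + h, deriv u t ^ 2 := by
          rw [mul_assoc _ h]; gcongr
  have hu' : Continuous (deriv u) := hu.continuous_deriv one_le_two
  have hper' : Function.Periodic (fun t => deriv u t ^ 2) L := hper.deriv.comp (· ^ 2)
  calc (∫ x in (0:ℝ)..L, |u (x + h) - u x| ^ 3)
      ≤ ∫ x in (0:ℝ)..L, 2 * M * h * ∫ t in x..x + h, deriv u t ^ 2 :=
        integral_mono_on hL.le (Continuous.intervalIntegrable (by fun_prop) _ _)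
          (((continuous_intervalIntegral_add (by fun_prop) h).const_mul _).intervalIntegrable _ _)
          fun x _ => hcube x
    _ = 2 * h ^ 2 * (M * D) := by
        rw [integral_const_mul, hper'.intervalIntegral_intervalIntegral_add (by fun_prop)]
        ring
    _ ≤ 2 * h ^ 2 * (2 * A ^ ((7 : ℝ) / 8) * B ^ ((5 : ℝ) / 8)) :=
        mul_le_mul_of_nonneg_left (mul_le_rpow_mul_rpow_of_pow_four_le hA hB hM4.le
          (sq_integral_deriv_sq_le_of_periodic hu hper)) (by positivity)
    _ = 4 * h ^ 2 * A ^ ((7 : ℝ) / 8) * B ^ ((5 : ℝ) / 8) := by ring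
end
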